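/- (Universal matching, exact form.) Let N be a finite set and let v, v_and, v_or : Finset N → ℝ satisfy the decomposition v(T) = v_and(T) + v_or(T) + v(∅) for every T ⊆ N. Define the AND interactions I_and(S) = ∑_{L ⊆ S} (-1)^{|S|-|L|} (v_and(L) - v_and(∅)) and the OR interactions I_or(S) = -∑_{L ⊆ S} (-1)^{|S|-|L|} v_or(N \ L). Then for every T ⊆ N, the network output on the masked sample is universally matched by interactions: v(T) = ∑_{∅ ≠ S ⊆ T} I_and(S) + ∑_{S ⊆ N, S ∩ T ≠ ∅} I_or(S) + v(∅). -/

import Mathlib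

/-!
Both interaction families are Möbius transforms on the Boolean lattice of subsets: `I_and` of
`L ↦ v_and(L) - v_and(∅)` and `-I_or` of `L ↦ v_or(N \ L)`. Möbius inversion, `∑_{S ⊆ T} I_f(S) =
f(T)` for the transform `I_f` of `f`, then gives `∑_{∅ ≠ S ⊆ T} I_and(S) = v_and(T) - v_and(∅)`,
and, comparing the sum over all `S` with the sum over `S ⊆ N \ T`,
`∑_{S ∩ T ≠ ∅} I_or(S) = v_or(T) - v_or(∅)`. The decomposition at `T = ∅` says
`v_and(∅) + v_or(∅) = 0`.
-/

open Finset

section Moebius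

variable {α R : Type*} [DecidableEq α] [Ring R]

def moebiusTransform (f : Finset α → R) (S : Finset α) : R :=
  ∑ L ∈ S.powerset, (-1 : R) ^ (#S - #L) * f L

theorem sum_Icc_neg_one_pow_card_sub {L T : Finset α} (h : L ⊆ T) :
    ∑ S ∈ Icc L T, (-1 : R) ^ (#S - #L) = if L = T then 1 else 0 := by
  have hinj : Set.InjOn (L ∪ ·) (T \ L).powerset := by
    intro M hM M' hM' hMM'
    simp only [coe_powerset, Set.mem_preimage, Set.mem_powerset_iff, coe_subset] at hM hM'
    have hsdiff := congrArg (· \ L) hMM'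
    simp only at hsdiff
    rwa [union_sdiff_cancel_left (disjoint_of_subset_right hM disjoint_sdiff),
      union_sdiff_cancel_left (disjoint_of_subset_right hM' disjoint_sdiff)] at hsdiff
  rw [Icc_eq_image_powerset h, sum_image hinj]
  have hcard : ∀ M ∈ (T \ L).powerset, #(L ∪ M) - #L = #M := fun M hM => by
    rw [card_union_of_disjoint (disjoint_of_subset_right (mem_powerset.1 hM) disjoint_sdiff)]
    omega
  rw [sum_congr rfl fun M hM => by rw [hcard M hM]]
  have halternating := congrArg (Int.cast : ℤ → R) (sum_powerset_neg_one_pow_card (x := T \ L))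
  push_cast at halternating
  rw [halternating]
  exact if_congr (sdiff_eq_empty_iff_subset.trans ⟨h.antisymm, fun hLT => hLT ▸ subset_rfl⟩) rfl rfl

theorem sum_powerset_moebiusTransform (f : Finset α → R) (T : Finset α) :
    ∑ S ∈ T.powerset, moebiusTransform f S = f T := by
  unfold moebiusTransform
  rw [sum_comm' (t' := T.powerset) (s' := fun L => Icc L T) (by
    intro S L
    simp only [mem_powerset, mem_Icc]
    exact ⟨fun ⟨hST, hLS⟩ => ⟨⟨hLS, hST⟩, hLS.trans hST⟩, fun ⟨⟨hLS, hST⟩, _⟩ => ⟨hST, hLS⟩⟩)]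
  simp_rw [← sum_mul]
  rw [sum_congr rfl fun L hL => by rw [sum_Icc_neg_one_pow_card_sub (mem_powerset.1 hL)]]
  simp

theorem sum_powerset_filter_ne_empty_moebiusTransform (f : Finset α → R) (T : Finset α) :
    ∑ S ∈ T.powerset.filter (fun S => S ≠ ∅), moebiusTransform f S = f T - f ∅ := by
  rw [eq_sub_iff_add_eq, ← sum_powerset_moebiusTransform f T,
    ← sum_filter_add_sum_filter_not T.powerset (fun S => S ≠ ∅)]
  congr 1
  rw [sum_eq_single_of_mem ∅ (by simp) fun S hS hne => absurd (not_not.1 (mem_filter.1 hS).2) hne]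
  simp [moebiusTransform]

theorem sum_filter_inter_ne_empty_moebiusTransform [Fintype α] (f : Finset α → R)
    (T : Finset α) :
    ∑ S ∈ (univ : Finset (Finset α)).filter (fun S => S ∩ T ≠ ∅), moebiusTransform f S
      = f univ - f Tᶜ := by
  have hdisjoint : (univ : Finset (Finset α)).filter (fun S => ¬S ∩ T ≠ ∅) = Tᶜ.powerset := by
    ext S
    simp [← disjoint_iff_inter_eq_empty, subset_compl_iff_disjoint_right]
  rw [eq_sub_iff_add_eq, ← sum_powerset_moebiusTransform f univ,
    ← sum_powerset_moebiusTransform f Tᶜ, ← hdisjoint, powerset_univ, sum_filter_add_sum_filter_not]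

end Moebius

/-- **Universal matching (exact form).**
If `v(T) = v_and(T) + v_or(T) + v(∅)` for every `T ⊆ N`, with AND interactions
`I_and(S) = ∑_{L ⊆ S} (-1)^{|S|-|L|} (v_and(L) - v_and(∅))` and OR interactions
`I_or(S) = -∑_{L ⊆ S} (-1)^{|S|-|L|} v_or(N \ L)`, then for every `T ⊆ N`:
`v(T) = ∑_{∅ ≠ S ⊆ T} I_and(S) + ∑_{S ⊆ N, S ∩ T ≠ ∅} I_or(S) + v(∅)`. -/
theorem universal_matching {N : Type*} [Fintype N] [DecidableEq N]
    (v vand vor : Finset N → ℝ)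
    (hdecomp : ∀ T : Finset N, v T = vand T + vor T + v ∅) (T : Finset N) :
    v T =
      (∑ S ∈ T.powerset.filter (fun S => S ≠ ∅),
        (∑ L ∈ S.powerset, (-1 : ℝ) ^ (S.card - L.card) * (vand L - vand ∅))) +
      (∑ S ∈ (Finset.univ : Finset (Finset N)).filter (fun S => S ∩ T ≠ ∅),
        (-(∑ L ∈ S.powerset, (-1 : ℝ) ^ (S.card - L.card) * vor Lᶜ))) +
      v ∅ := by
  have hand := sum_powerset_filter_ne_empty_moebiusTransform (fun L => vand L - vand ∅) T
  have hor := sum_filter_inter_ne_empty_moebiusTransform (fun L => vor Lᶜ) T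
  simp only [moebiusTransform, sub_self, compl_univ, compl_compl] at hand hor
  rw [hand, sum_neg_distrib, hor, hdecomp T]
  linarith [hdecomp ∅]
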